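/- arXiv:2112.15564 — 5 statements merged into one kernel-verified Lean document; each statement's English description precedes it below -/
import Mathlib

section
/- Let w:[0,1]→ℂ be C² with w(0)=w(1)=0, and let k>0, c₁>0. Then for every z∈[0,1], |w(z)| ≤ (z/√k)·(2c₁·‖w'‖²_{L²(0,1)} + (k²/(2c₁))·‖w''‖²_{L²(0,1)})^{1/2}. -/
/-! Rolle's theorem does not apply to the complex-valued `w` itself, but it does to `φ ∘ w` for a
real functional `φ` with `‖φ‖ ≤ 1` and `φ (w' t) = ‖w' t‖`: it gives `s ∈ (0,1)` with
`φ (w' s) = 0`, and integrating `((φ ∘ w')²)' = 2 (φ ∘ w') (φ ∘ w'')` from `s` to `t` yields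
`‖w'(t)‖² ≤ 2 ∫₀¹ ‖w'‖ ‖w''‖`. Young's inequality with weight `2c₁/k` bounds this by
`(2c₁ ‖w'‖² + (k²/(2c₁)) ‖w''‖²) / k`, and the mean value inequality on `[0, z]` finishes. -/

open intervalIntegral Real Set MeasureTheory

lemma sq_le_integral_two_mul_abs_mul_abs {g g' : ℝ → ℝ} {a b s t : ℝ}
    (hg : ∀ x, HasDerivAt g (g' x) x) (hg' : Continuous g') (hs : s ∈ Icc a b)
    (ht : t ∈ Icc a b) (hgs : g s = 0) :
    g t ^ 2 ≤ ∫ x in a..b, 2 * |g x| * |g' x| := by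
  have hgc : Continuous g := continuous_iff_continuousAt.2 fun x => (hg x).continuousAt
  have hint : Continuous fun x => 2 * g x * g' x := by fun_prop
  have hsq : ∀ x, HasDerivAt (fun y => g y ^ 2) (2 * g x * g' x) x :=
    fun x => by simpa using (hg x).fun_pow 2
  have hftc : ∫ x in s..t, 2 * g x * g' x = g t ^ 2 := by
    simp [integral_eq_sub_of_hasDerivAt (fun x _ => hsq x) (hint.intervalIntegrable s t), hgs]
  have hsub : uIoc s t ⊆ uIoc a b := uIoc_subset_uIoc_of_uIcc_subset_uIcc
    (uIcc_subset_uIcc (Icc_subset_uIcc hs) (Icc_subset_uIcc ht))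
  calc g t ^ 2 = ‖∫ x in s..t, 2 * g x * g' x‖ := by rw [hftc, norm_pow, Real.norm_eq_abs, sq_abs]
    _ ≤ |∫ x in s..t, ‖2 * g x * g' x‖| := norm_integral_le_abs_integral_norm
    _ ≤ |∫ x in a..b, ‖2 * g x * g' x‖| := abs_integral_mono_interval hsub
      (ae_of_all _ fun _ => norm_nonneg _) (hint.norm.intervalIntegrable a b)
    _ = ∫ x in a..b, 2 * |g x| * |g' x| := by
      rw [abs_of_nonneg (integral_nonneg (hs.1.trans hs.2) fun _ _ => norm_nonneg _)]
      simp only [norm_mul, Real.norm_eq_abs, abs_two]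

lemma sq_norm_le_integral_two_mul_norm_mul_norm {E : Type*} [NormedAddCommGroup E]
    [NormedSpace ℝ E] {w u v : ℝ → E} {a b t : ℝ} (hab : a < b)
    (hw : ∀ x, HasDerivAt w (u x) x) (hu : ∀ x, HasDerivAt u (v x) x) (hv : Continuous v)
    (ha : w a = 0) (hb : w b = 0) (ht : t ∈ Icc a b) :
    ‖u t‖ ^ 2 ≤ ∫ x in a..b, 2 * ‖u x‖ * ‖v x‖ := by
  obtain ⟨φ, hφ, hφt⟩ := exists_dual_vector'' ℝ (u t)
  have hwc : Continuous w := continuous_iff_continuousAt.2 fun x => (hw x).continuousAt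
  have huc : Continuous u := continuous_iff_continuousAt.2 fun x => (hu x).continuousAt
  have hφw : ∀ x, HasDerivAt (fun y => φ (w y)) (φ (u x)) x :=
    fun x => φ.hasFDerivAt.comp_hasDerivAt x (hw x)
  have hφu : ∀ x, HasDerivAt (fun y => φ (u y)) (φ (v x)) x :=
    fun x => φ.hasFDerivAt.comp_hasDerivAt x (hu x)
  obtain ⟨s, hs, hφs⟩ := exists_hasDerivAt_eq_zero hab (φ.continuous.comp hwc).continuousOn
    (by simp [ha, hb]) fun x _ => hφw x
  have hφle : ∀ y, |φ y| ≤ ‖y‖ := fun y => by simpa using φ.le_of_opNorm_le hφ y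
  calc ‖u t‖ ^ 2 = φ (u t) ^ 2 := by rw [hφt]; rfl
    _ ≤ ∫ x in a..b, 2 * |φ (u x)| * |φ (v x)| :=
      sq_le_integral_two_mul_abs_mul_abs hφu (φ.continuous.comp hv) (Ioo_subset_Icc_self hs) ht hφs
    _ ≤ ∫ x in a..b, 2 * ‖u x‖ * ‖v x‖ := by
      refine integral_mono_on hab.le ?_ ?_ fun x _ => by gcongr <;> exact hφle _
      · exact (by fun_prop : Continuous fun x => 2 * |φ (u x)| * |φ (v x)|).intervalIntegrable _ _
      · exact (by fun_prop : Continuous fun x => 2 * ‖u x‖ * ‖v x‖).intervalIntegrable _ _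

lemma integral_two_mul_mul_le {f g : ℝ → ℝ} {a b ε : ℝ} (hab : a ≤ b) (hε : 0 < ε)
    (hf : Continuous f) (hg : Continuous g) :
    ∫ x in a..b, 2 * f x * g x ≤ ε * (∫ x in a..b, f x ^ 2) + ε⁻¹ * ∫ x in a..b, g x ^ 2 := by
  have hf2 : Continuous fun x => ε * f x ^ 2 := by fun_prop
  have hg2 : Continuous fun x => ε⁻¹ * g x ^ 2 := by fun_prop
  calc ∫ x in a..b, 2 * f x * g x ≤ ∫ x in a..b, (ε * f x ^ 2 + ε⁻¹ * g x ^ 2) :=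
        integral_mono_on hab ((by fun_prop : Continuous fun x => 2 * f x * g x).intervalIntegrable _ _)
          ((hf2.add hg2).intervalIntegrable _ _)
          fun x _ => two_mul_le_add_mul_sq hε
    _ = ε * (∫ x in a..b, f x ^ 2) + ε⁻¹ * ∫ x in a..b, g x ^ 2 := by
      rw [intervalIntegral.integral_add (hf2.intervalIntegrable _ _) (hg2.intervalIntegrable _ _),
        intervalIntegral.integral_const_mul, intervalIntegral.integral_const_mul]

/-- For `w ∈ C²([0,1];ℂ)` with `w(0)=w(1)=0` and any `k, c₁ > 0`:
`|w(z)| ≤ (z/√k) (2c₁ ‖w'‖² + (k²/(2c₁)) ‖w''‖²)^{1/2}` for every `z ∈ [0,1]`. -/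
theorem stmt4 (w : ℝ → ℂ) (hw : ContDiff ℝ 2 w) (h0 : w 0 = 0) (h1 : w 1 = 0)
    (k c₁ : ℝ) (hk : 0 < k) (hc₁ : 0 < c₁) :
    ∀ z ∈ Set.Icc (0:ℝ) 1,
      ‖w z‖ ≤ (z / Real.sqrt k) *
        Real.sqrt (2 * c₁ * (∫ t in (0:ℝ)..1, ‖deriv w t‖ ^ 2)
          + (k ^ 2 / (2 * c₁)) * (∫ t in (0:ℝ)..1, ‖iteratedDeriv 2 w t‖ ^ 2)) := by
  intro z hz
  have hw' : ∀ x, HasDerivAt w (deriv w x) x :=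
    fun x => (hw.differentiable (by norm_num) x).hasDerivAt
  have hw'' : ∀ x, HasDerivAt (deriv w) (iteratedDeriv 2 w x) x := by
    rw [iteratedDeriv_succ, iteratedDeriv_one]
    exact fun x => ((hw.iterate_deriv' 1 1).differentiable one_ne_zero x).hasDerivAt
  have hv : Continuous (iteratedDeriv 2 w) := hw.continuous_iteratedDeriv 2 le_rfl
  have hu : Continuous (deriv w) := hw.continuous_deriv (by norm_num)
  set M := 2 * c₁ * (∫ t in (0:ℝ)..1, ‖deriv w t‖ ^ 2)
    + (k ^ 2 / (2 * c₁)) * (∫ t in (0:ℝ)..1, ‖iteratedDeriv 2 w t‖ ^ 2)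
  have hweights : ∀ A B : ℝ, 2 * c₁ / k * A + (2 * c₁ / k)⁻¹ * B
      = (2 * c₁ * A + k ^ 2 / (2 * c₁) * B) / k := by
    intro A B
    field_simp
  have hbound : ∀ x ∈ Icc (0:ℝ) 1, ‖deriv w x‖ ≤ √M / √k := by
    intro x hx
    rw [← sqrt_div' _ hk.le]
    exact le_sqrt_of_sq_le
      ((sq_norm_le_integral_two_mul_norm_mul_norm one_pos hw' hw'' hv h0 h1 hx).trans
        ((integral_two_mul_mul_le zero_le_one (by positivity) hu.norm hv.norm).trans_eq
          (hweights _ _)))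
  have hmvt := norm_image_sub_le_of_norm_deriv_le_segment' (fun x _ => (hw' x).hasDerivWithinAt)
    (fun x hx => hbound x (Ico_subset_Icc_self hx)) z hz
  rw [h0, sub_zero, sub_zero] at hmvt
  calc ‖w z‖ ≤ √M / √k * z := hmvt
    _ = z / √k * √M := by ring
end

section
/- For each fixed k>0, on the space of functions w∈C⁴([0,1];ℂ) with w(0)=w(1)=0 and w'(0)=w'(1)=0, the inequality ‖w'''' ‖²_{L²} + 6k⁴‖w''‖²_{L²} + k⁸‖w‖²_{L²} + 4k⁶‖w'‖²_{L²} - 4k²∫₀¹|w''''||w''| ≤ ‖w'''' + k⁴w - 2k²w''‖²_{L²} holds; consequently there is a universal constant C>0 such that k²‖w''‖²_{L²(0,1)} + (1/k²)‖w''''‖²_{L²(0,1)} ≤ C·‖w'''' - 2k²w'' + k⁴w‖²_{L²(0,1)}/k². -/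
/-!
Expanding `‖w'''' + k⁴ w - 2k² w''‖²` pointwise gives the squared norms of `w''''`, `w`, `w''`
and three cross terms. Integrating by parts, with every boundary term killed by `w = w' = 0`,
turns `∫ ⟪w'''', w⟫` into `∫ ‖w''‖²` and `∫ ⟪w, w''⟫` into `-∫ ‖w'‖²`; only the cross term
`4k² ∫ ⟪w'''', w''⟫` survives, and Cauchy–Schwarz bounds it. Young's inequality
`4k² xy ≤ (7/10) x² + (40/7) k⁴ y²` then absorbs it, leaving
`(3/10) ‖w''''‖² + (2/7) k⁴ ‖w''‖² ≤ ‖w'''' - 2k² w'' + k⁴ w‖²`, whence the constant `C = 7/2`.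
-/

open intervalIntegral
open scoped RealInnerProductSpace Interval

variable {E : Type*} [NormedAddCommGroup E] [InnerProductSpace ℝ E]

theorem intervalIntegral.integral_inner_deriv_eq_deriv_inner {u v u' v' : ℝ → E} {a b : ℝ}
    (hu : ∀ x ∈ [[a, b]], HasDerivAt u (u' x) x) (hv : ∀ x ∈ [[a, b]], HasDerivAt v (v' x) x)
    (hu' : ContinuousOn u' [[a, b]]) (hv' : ContinuousOn v' [[a, b]]) :
    ∫ x in a..b, ⟪u x, v' x⟫ = ⟪u b, v b⟫ - ⟪u a, v a⟫ - ∫ x in a..b, ⟪u' x, v x⟫ := by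
  have hcu : ContinuousOn u [[a, b]] := fun x hx => (hu x hx).continuousAt.continuousWithinAt
  have hcv : ContinuousOn v [[a, b]] := fun x hx => (hv x hx).continuousAt.continuousWithinAt
  have h1 : IntervalIntegrable (fun x => ⟪u x, v' x⟫) MeasureTheory.volume a b :=
    (hcu.inner hv').intervalIntegrable
  have h2 : IntervalIntegrable (fun x => ⟪u' x, v x⟫) MeasureTheory.volume a b :=
    (hu'.inner hcv).intervalIntegrable
  rw [← integral_eq_sub_of_hasDerivAt (fun x hx => (hu x hx).inner ℝ (hv x hx)) (h1.add h2),
    integral_add h1 h2]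
  ring

theorem ContDiff.hasDerivAt_iteratedDeriv {𝕜 F : Type*} [NontriviallyNormedField 𝕜]
    [NormedAddCommGroup F] [NormedSpace 𝕜 F] {f : 𝕜 → F} {n : WithTop ℕ∞} {m : ℕ}
    (hf : ContDiff 𝕜 n f) (hm : m < n) (x : 𝕜) :
    HasDerivAt (iteratedDeriv m f) (iteratedDeriv (m + 1) f x) x := by
  rw [iteratedDeriv_succ]
  exact (hf.differentiable_iteratedDeriv m hm x).hasDerivAt

theorem norm_add_smul_sub_smul_sq (x y z : E) (k : ℝ) :
    ‖x + k ^ 4 • y - (2 * k ^ 2) • z‖ ^ 2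
      = ‖x‖ ^ 2 + k ^ 8 * ‖y‖ ^ 2 + 4 * k ^ 4 * ‖z‖ ^ 2
        + 2 * k ^ 4 * ⟪x, y⟫ - 4 * k ^ 2 * ⟪x, z⟫ - 4 * k ^ 6 * ⟪y, z⟫ := by
  simp only [← real_inner_self_eq_norm_sq, inner_add_left, inner_add_right, inner_sub_left,
    inner_sub_right, real_inner_smul_left, real_inner_smul_right, real_inner_comm y x,
    real_inner_comm z x, real_inner_comm z y]
  ring

theorem ContDiff.integral_inner_iteratedDeriv_succ {w : ℝ → E} {n i j : ℕ}
    (hw : ContDiff ℝ n w) (hi : i < n) (hj : j < n) (a b : ℝ) :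
    ∫ x in a..b, ⟪iteratedDeriv i w x, iteratedDeriv (j + 1) w x⟫
      = ⟪iteratedDeriv i w b, iteratedDeriv j w b⟫ - ⟪iteratedDeriv i w a, iteratedDeriv j w a⟫
        - ∫ x in a..b, ⟪iteratedDeriv (i + 1) w x, iteratedDeriv j w x⟫ :=
  integral_inner_deriv_eq_deriv_inner
    (fun x _ => hw.hasDerivAt_iteratedDeriv (by exact_mod_cast hi) x)
    (fun x _ => hw.hasDerivAt_iteratedDeriv (by exact_mod_cast hj) x)
    (hw.continuous_iteratedDeriv _ (by exact_mod_cast hi)).continuousOn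
    (hw.continuous_iteratedDeriv _ (by exact_mod_cast hj)).continuousOn

theorem integral_inner_iteratedDeriv_four_self {w : ℝ → E} {a b : ℝ} (hw : ContDiff ℝ 4 w)
    (ha : w a = 0) (hb : w b = 0) (ha' : deriv w a = 0) (hb' : deriv w b = 0) :
    ∫ x in a..b, ⟪iteratedDeriv 4 w x, w x⟫ = ∫ x in a..b, ‖iteratedDeriv 2 w x‖ ^ 2 := by
  have h₁ := hw.integral_inner_iteratedDeriv_succ (i := 3) (j := 0) (by norm_num) (by norm_num) a b
  have h₂ := hw.integral_inner_iteratedDeriv_succ (i := 2) (j := 1) (by norm_num) (by norm_num) a b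
  simp only [iteratedDeriv_zero, iteratedDeriv_one, Nat.reduceAdd, ha, hb, ha', hb',
    inner_zero_right, sub_zero, zero_sub, real_inner_self_eq_norm_sq] at h₁ h₂
  linarith

theorem integral_inner_self_iteratedDeriv_two {w : ℝ → E} {a b : ℝ} (hw : ContDiff ℝ 2 w)
    (ha : w a = 0) (hb : w b = 0) :
    ∫ x in a..b, ⟪w x, iteratedDeriv 2 w x⟫ = -∫ x in a..b, ‖deriv w x‖ ^ 2 := by
  have h := hw.integral_inner_iteratedDeriv_succ (i := 0) (j := 1) (by norm_num) (by norm_num) a b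
  simpa only [iteratedDeriv_zero, iteratedDeriv_one, Nat.reduceAdd, ha, hb,
    inner_zero_left, sub_zero, zero_sub, real_inner_self_eq_norm_sq] using h

theorem integral_norm_sq_clamped_eq {w : ℝ → E} {a b : ℝ} (hw : ContDiff ℝ 4 w)
    (ha : w a = 0) (hb : w b = 0) (ha' : deriv w a = 0) (hb' : deriv w b = 0) (k : ℝ) :
    ∫ x in a..b, ‖iteratedDeriv 4 w x + k ^ 4 • w x - (2 * k ^ 2) • iteratedDeriv 2 w x‖ ^ 2
      = (∫ x in a..b, ‖iteratedDeriv 4 w x‖ ^ 2)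
        + 6 * k ^ 4 * (∫ x in a..b, ‖iteratedDeriv 2 w x‖ ^ 2)
        + k ^ 8 * (∫ x in a..b, ‖w x‖ ^ 2)
        + 4 * k ^ 6 * (∫ x in a..b, ‖deriv w x‖ ^ 2)
        - 4 * k ^ 2 * ∫ x in a..b, ⟪iteratedDeriv 4 w x, iteratedDeriv 2 w x⟫ := by
  have h₀ : Continuous w := hw.continuous
  have h₁ : Continuous (deriv w) := hw.continuous_deriv (by norm_num)
  have h₂ : Continuous (iteratedDeriv 2 w) := hw.continuous_iteratedDeriv 2 (by norm_num)
  have h₄ : Continuous (iteratedDeriv 4 w) := hw.continuous_iteratedDeriv 4 le_rfl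
  simp_rw [norm_add_smul_sub_smul_sq]
  simp (disch := exact Continuous.intervalIntegrable (by fun_prop) _ _) only
    [integral_add, integral_sub, integral_const_mul]
  rw [integral_inner_iteratedDeriv_four_self hw ha hb ha' hb',
    integral_inner_self_iteratedDeriv_two (hw.of_le (by norm_num)) ha hb]
  ring

theorem integral_norm_sq_clamped_ge {w : ℝ → E} {a b : ℝ} (hab : a ≤ b) (hw : ContDiff ℝ 4 w)
    (ha : w a = 0) (hb : w b = 0) (ha' : deriv w a = 0) (hb' : deriv w b = 0) (k : ℝ) :
    (∫ x in a..b, ‖iteratedDeriv 4 w x‖ ^ 2)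
        + 6 * k ^ 4 * (∫ x in a..b, ‖iteratedDeriv 2 w x‖ ^ 2)
        + k ^ 8 * (∫ x in a..b, ‖w x‖ ^ 2)
        + 4 * k ^ 6 * (∫ x in a..b, ‖deriv w x‖ ^ 2)
        - 4 * k ^ 2 * (∫ x in a..b, ‖iteratedDeriv 4 w x‖ * ‖iteratedDeriv 2 w x‖)
      ≤ ∫ x in a..b,
          ‖iteratedDeriv 4 w x + k ^ 4 • w x - (2 * k ^ 2) • iteratedDeriv 2 w x‖ ^ 2 := by
  have h₂ : Continuous (iteratedDeriv 2 w) := hw.continuous_iteratedDeriv 2 (by norm_num)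
  have h₄ : Continuous (iteratedDeriv 4 w) := hw.continuous_iteratedDeriv 4 le_rfl
  have hinner : ∫ x in a..b, ⟪iteratedDeriv 4 w x, iteratedDeriv 2 w x⟫
      ≤ ∫ x in a..b, ‖iteratedDeriv 4 w x‖ * ‖iteratedDeriv 2 w x‖ :=
    integral_mono_on hab ((h₄.inner h₂).intervalIntegrable _ _)
      ((h₄.norm.mul h₂.norm).intervalIntegrable _ _) fun x _ => real_inner_le_norm _ _
  rw [integral_norm_sq_clamped_eq hw ha hb ha' hb']
  gcongr

theorem integral_norm_sq_clamped_coercive {w : ℝ → E} {a b : ℝ} (hab : a ≤ b)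
    (hw : ContDiff ℝ 4 w) (ha : w a = 0) (hb : w b = 0) (ha' : deriv w a = 0)
    (hb' : deriv w b = 0) (k : ℝ) :
    k ^ 4 * (∫ x in a..b, ‖iteratedDeriv 2 w x‖ ^ 2) + ∫ x in a..b, ‖iteratedDeriv 4 w x‖ ^ 2
      ≤ 7 / 2 * ∫ x in a..b,
          ‖iteratedDeriv 4 w x + k ^ 4 • w x - (2 * k ^ 2) • iteratedDeriv 2 w x‖ ^ 2 := by
  have h₂ : Continuous (iteratedDeriv 2 w) := hw.continuous_iteratedDeriv 2 (by norm_num)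
  have h₄ : Continuous (iteratedDeriv 4 w) := hw.continuous_iteratedDeriv 4 le_rfl
  have young : 4 * k ^ 2 * (∫ x in a..b, ‖iteratedDeriv 4 w x‖ * ‖iteratedDeriv 2 w x‖)
      ≤ 7 / 10 * (∫ x in a..b, ‖iteratedDeriv 4 w x‖ ^ 2)
        + 40 / 7 * k ^ 4 * ∫ x in a..b, ‖iteratedDeriv 2 w x‖ ^ 2 := by
    have hmono : ∫ x in a..b, 4 * k ^ 2 * (‖iteratedDeriv 4 w x‖ * ‖iteratedDeriv 2 w x‖)
        ≤ ∫ x in a..b, (7 / 10 * ‖iteratedDeriv 4 w x‖ ^ 2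
          + 40 / 7 * k ^ 4 * ‖iteratedDeriv 2 w x‖ ^ 2) :=
      integral_mono_on hab (Continuous.intervalIntegrable (by fun_prop) _ _)
        (Continuous.intervalIntegrable (by fun_prop) _ _) fun x _ => by
          nlinarith [sq_nonneg (7 * ‖iteratedDeriv 4 w x‖ - 20 * k ^ 2 * ‖iteratedDeriv 2 w x‖)]
    simpa (disch := exact Continuous.intervalIntegrable (by fun_prop) _ _) only
      [integral_add, integral_const_mul] using hmono
  have hnonneg : ∀ f : ℝ → E, 0 ≤ ∫ x in a..b, ‖f x‖ ^ 2 := fun f =>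
    integral_nonneg hab fun x _ => sq_nonneg _
  have hge := integral_norm_sq_clamped_ge hab hw ha hb ha' hb' k
  linarith [mul_nonneg (by positivity : (0 : ℝ) ≤ k ^ 8) (hnonneg w),
    mul_nonneg (by positivity : (0 : ℝ) ≤ k ^ 6) (hnonneg (deriv w)), hnonneg (iteratedDeriv 4 w)]

/-- Integration-by-parts inequality for clamped `C⁴` functions, and the resulting
universal coercivity bound for the operator `w'''' - 2k² w'' + k⁴ w`. -/
theorem stmt7 :
    (∀ (k : ℝ), 0 < k → ∀ w : ℝ → ℂ, ContDiff ℝ 4 w →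
      w 0 = 0 → w 1 = 0 → deriv w 0 = 0 → deriv w 1 = 0 →
      (∫ z in (0:ℝ)..1, ‖iteratedDeriv 4 w z‖ ^ 2)
        + 6 * k ^ 4 * (∫ z in (0:ℝ)..1, ‖iteratedDeriv 2 w z‖ ^ 2)
        + k ^ 8 * (∫ z in (0:ℝ)..1, ‖w z‖ ^ 2)
        + 4 * k ^ 6 * (∫ z in (0:ℝ)..1, ‖deriv w z‖ ^ 2)
        - 4 * k ^ 2 * (∫ z in (0:ℝ)..1, ‖iteratedDeriv 4 w z‖ * ‖iteratedDeriv 2 w z‖)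
      ≤ ∫ z in (0:ℝ)..1,
          ‖iteratedDeriv 4 w z + (k:ℂ) ^ 4 * w z - 2 * (k:ℂ) ^ 2 * iteratedDeriv 2 w z‖ ^ 2)
    ∧
    ∃ C : ℝ, 0 < C ∧ ∀ (k : ℝ), 0 < k → ∀ w : ℝ → ℂ, ContDiff ℝ 4 w →
      w 0 = 0 → w 1 = 0 → deriv w 0 = 0 → deriv w 1 = 0 →
      k ^ 2 * (∫ z in (0:ℝ)..1, ‖iteratedDeriv 2 w z‖ ^ 2)
        + (1 / k ^ 2) * (∫ z in (0:ℝ)..1, ‖iteratedDeriv 4 w z‖ ^ 2)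
      ≤ C * (∫ z in (0:ℝ)..1,
          ‖iteratedDeriv 4 w z - 2 * (k:ℂ) ^ 2 * iteratedDeriv 2 w z + (k:ℂ) ^ 4 * w z‖ ^ 2)
            / k ^ 2 := by
  refine ⟨fun k _ w hw h0 h1 h0' h1' => ?_, 7 / 2, by norm_num, fun k hk w hw h0 h1 h0' h1' => ?_⟩
  · simpa only [Complex.real_smul, Complex.ofReal_pow, Complex.ofReal_mul, Complex.ofReal_ofNat]
      using integral_norm_sq_clamped_ge zero_le_one hw h0 h1 h0' h1' k
  · have h := integral_norm_sq_clamped_coercive zero_le_one hw h0 h1 h0' h1' k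
    simp only [Complex.real_smul, Complex.ofReal_pow, Complex.ofReal_mul, Complex.ofReal_ofNat,
      ← sub_add_eq_add_sub] at h
    rw [le_div_iff₀ (by positivity)]
    refine le_of_eq_of_le ?_ h
    field_simp
end

section
/- Let w,ζ:[0,1]→ℂ be C² with w=ζ=0 at z=0 and z=1, satisfying w''−k²w = kζ on (0,1) for some k>0. Then (8/9)‖w''‖²_{L²(0,1)} + (8/3)k²‖w'‖²_{L²(0,1)} ≤ k²‖ζ‖²_{L²(0,1)}. -/
open intervalIntegral Real ComplexConjugate

/-! Integrating `w'' · conj w` by parts against the boundary conditions gives, for every real `c`,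
`∫ ‖w'' - c w‖² = ‖w''‖² + 2c ‖w'‖² + c² ‖w‖²`.
For `c = k²` the left side is `k² ‖ζ‖²`; for `c = -3k²` its nonnegativity reads
`6k² ‖w'‖² ≤ ‖w''‖² + 9k⁴ ‖w‖²`, a Young-type bound that absorbs the `k⁴ ‖w‖²` term. -/

theorem Complex.norm_sub_ofReal_mul_sq (u v : ℂ) (c : ℝ) :
    ‖u - c * v‖ ^ 2 = ‖u‖ ^ 2 - 2 * c * (u * conj v).re + c ^ 2 * ‖v‖ ^ 2 := by
  have hre : (u * conj (c * v)).re = c * (u * conj v).re := by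
    rw [map_mul, Complex.conj_ofReal, mul_left_comm, Complex.re_ofReal_mul]
  simp only [Complex.sq_norm, Complex.normSq_sub, Complex.normSq_mul, Complex.normSq_ofReal, hre]
  ring

theorem integral_re_iteratedDeriv_two_mul_conj {w : ℝ → ℂ} (hw : ContDiff ℝ 2 w) {a b : ℝ}
    (ha : w a = 0) (hb : w b = 0) :
    ∫ z in a..b, (iteratedDeriv 2 w z * conj (w z)).re = -∫ z in a..b, ‖deriv w z‖ ^ 2 := by
  have hw' : ContDiff ℝ 1 (deriv w) := hw.deriv'
  have hc : Continuous w := hw.continuous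
  have hc' : Continuous (deriv w) := hw'.continuous
  have hc'' : Continuous (deriv (deriv w)) := hw'.continuous_deriv le_rfl
  have hparts : ∫ z in a..b, deriv (deriv w) z * conj (w z) + deriv w z * conj (deriv w z) = 0 := by
    refine (integral_deriv_mul_eq_sub (u := deriv w) (v := fun z => conj (w z))
      (fun z _ => (hw'.differentiable one_ne_zero z).hasDerivAt)
      (fun z _ => (hw.differentiable two_ne_zero z).hasDerivAt.star)
      (hc''.intervalIntegrable a b) ((continuous_star.comp hc').intervalIntegrable a b)).trans ?_
    simp [ha, hb]
  have hsq : ∀ z, (deriv w z * conj (deriv w z)).re = ‖deriv w z‖ ^ 2 := fun z => by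
    rw [Complex.mul_conj, Complex.ofReal_re, Complex.normSq_eq_norm_sq]
  rw [iteratedDeriv_succ, iteratedDeriv_one, eq_neg_iff_add_eq_zero]
  simp only [← hsq]
  rw [← intervalIntegral.integral_add ((by fun_prop : Continuous _).intervalIntegrable a b)
    ((by fun_prop : Continuous _).intervalIntegrable a b)]
  simp only [← Complex.add_re]
  refine (intervalIntegral_re (f := fun z => deriv (deriv w) z * conj (w z) +
    deriv w z * conj (deriv w z)) ((by fun_prop : Continuous _).intervalIntegrable a b)).trans ?_
  rw [hparts, map_zero]

theorem integral_norm_sq_iteratedDeriv_two_sub_ofReal_mul {w : ℝ → ℂ} (hw : ContDiff ℝ 2 w)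
    {a b : ℝ} (ha : w a = 0) (hb : w b = 0) (c : ℝ) :
    ∫ z in a..b, ‖iteratedDeriv 2 w z - c * w z‖ ^ 2 =
      (∫ z in a..b, ‖iteratedDeriv 2 w z‖ ^ 2) + 2 * c * (∫ z in a..b, ‖deriv w z‖ ^ 2)
        + c ^ 2 * ∫ z in a..b, ‖w z‖ ^ 2 := by
  have hc : Continuous w := hw.continuous
  have hc' : Continuous (deriv w) := hw.continuous_deriv one_le_two
  have hc'' : Continuous (iteratedDeriv 2 w) := hw.continuous_iteratedDeriv 2 le_rfl
  simp only [Complex.norm_sub_ofReal_mul_sq]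
  rw [integral_add, integral_sub, integral_const_mul, integral_const_mul,
    integral_re_iteratedDeriv_two_mul_conj hw ha hb]
  · ring
  all_goals exact (by fun_prop : Continuous _).intervalIntegrable a b

theorem stmt9_general (w ζ : ℝ → ℂ) (hw : ContDiff ℝ 2 w)
    (hw0 : w 0 = 0) (hw1 : w 1 = 0)
    (k : ℝ)
    (hode : ∀ z ∈ Set.Ioo (0:ℝ) 1,
      iteratedDeriv 2 w z - (k:ℂ) ^ 2 * w z = (k:ℂ) * ζ z) :
    (8/9) * (∫ z in (0:ℝ)..1, ‖iteratedDeriv 2 w z‖ ^ 2)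
      + (8/3) * k ^ 2 * (∫ z in (0:ℝ)..1, ‖deriv w z‖ ^ 2)
    ≤ k ^ 2 * ∫ z in (0:ℝ)..1, ‖ζ z‖ ^ 2 := by
  have hζ : k ^ 2 * ∫ z in (0:ℝ)..1, ‖ζ z‖ ^ 2 =
      ∫ z in (0:ℝ)..1, ‖iteratedDeriv 2 w z - ((k ^ 2 : ℝ) : ℂ) * w z‖ ^ 2 := by
    rw [← integral_const_mul, integral_of_le zero_le_one, integral_of_le zero_le_one,
      MeasureTheory.integral_Ioc_eq_integral_Ioo, MeasureTheory.integral_Ioc_eq_integral_Ioo]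
    refine MeasureTheory.setIntegral_congr_fun measurableSet_Ioo fun z hz => ?_
    rw [Complex.ofReal_pow, hode z hz, norm_mul, Complex.norm_real, Real.norm_eq_abs, mul_pow,
      sq_abs]
  have hnonneg :
      0 ≤ ∫ z in (0:ℝ)..1, ‖iteratedDeriv 2 w z - ((-(3 * k ^ 2) : ℝ) : ℂ) * w z‖ ^ 2 :=
    integral_nonneg zero_le_one fun _ _ => by positivity
  rw [integral_norm_sq_iteratedDeriv_two_sub_ofReal_mul hw hw0 hw1] at hζ hnonneg
  linear_combination hnonneg / 9 - hζ

/-- Pseudo-vorticity energy estimate: if `w'' - k² w = k ζ` with `w, ζ` vanishing at the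
endpoints, then `(8/9)‖w''‖² + (8/3)k²‖w'‖² ≤ k²‖ζ‖²`. -/
theorem stmt9 (w ζ : ℝ → ℂ) (hw : ContDiff ℝ 2 w) (hζ : ContDiff ℝ 2 ζ)
    (hw0 : w 0 = 0) (hw1 : w 1 = 0) (hζ0 : ζ 0 = 0) (hζ1 : ζ 1 = 0)
    (k : ℝ) (hk : 0 < k)
    (hode : ∀ z ∈ Set.Ioo (0:ℝ) 1,
      iteratedDeriv 2 w z - (k:ℂ) ^ 2 * w z = (k:ℂ) * ζ z) :
    (8/9) * (∫ z in (0:ℝ)..1, ‖iteratedDeriv 2 w z‖ ^ 2)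
      + (8/3) * k ^ 2 * (∫ z in (0:ℝ)..1, ‖deriv w z‖ ^ 2)
    ≤ k ^ 2 * ∫ z in (0:ℝ)..1, ‖ζ z‖ ^ 2 :=
  stmt9_general w ζ hw hw0 hw1 k hode
end

section
/- Let w∈C²([0,1];ℂ) with w(0)=w(1)=0 satisfy w''−k²w = kζ for some k>0 and ζ∈L²(0,1). Then for every z∈[0,1], |w(z)| ≤ C·k^{1/2}·z·‖ζ‖_{L²(0,1)} for a universal constant C. -/
/-!
With `f = w'' - k² w`, testing the equation against `w` and integrating by parts gives the
energy inequality `k² ‖w‖² + ‖w'‖² ≤ ‖f‖ ‖w‖` (all norms in `L²(0,1)`). Together with the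
Poincaré bound `‖w‖ ≤ ‖w'‖` it yields `k² ‖w‖ ≤ ‖f‖`, `‖w'‖ ≤ ‖f‖` and `k ‖w'‖ ≤ ‖f‖`.
At a point `c` where `|w'|` is minimal, `|w'(c)|² ≤ ‖w'‖²`; integrating `(|w'|²)' = 2⟨w', w''⟩`
from `c` and using `|w''| ≤ k² |w| + |f|` bounds `|w'|²` everywhere by
`‖w'‖² + 2 (k² ‖w‖ + ‖f‖) ‖w'‖ ≤ 5 ‖f‖² / k`. Hence `|w(z)| ≤ z √(5 / k) ‖f‖`, and `‖f‖ = k ‖ζ‖`.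
-/
open intervalIntegral Real Set

theorem integral_mul_le_sqrt_mul_sqrt {a b : ℝ} (hab : a ≤ b) {f g : ℝ → ℝ}
    (hf : Continuous f) (hg : Continuous g) :
    ∫ t in a..b, f t * g t ≤ √(∫ t in a..b, f t ^ 2) * √(∫ t in a..b, g t ^ 2) := by
  have hquad : ∀ s : ℝ, 0 ≤ (∫ t in a..b, f t ^ 2) * (s * s)
      + (-2 * ∫ t in a..b, f t * g t) * s + ∫ t in a..b, g t ^ 2 := by
    intro s
    have hexp : ∫ t in a..b, (s * f t - g t) ^ 2 = (∫ t in a..b, f t ^ 2) * (s * s)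
        + (-2 * ∫ t in a..b, f t * g t) * s + ∫ t in a..b, g t ^ 2 := by
      have : ∀ t, (s * f t - g t) ^ 2 = (s * s) * f t ^ 2 + (-2 * s) * (f t * g t) + g t ^ 2 :=
        fun t => by ring
      simp_rw [this]
      rw [integral_add (Continuous.intervalIntegrable (by fun_prop) _ _)
          (Continuous.intervalIntegrable (by fun_prop) _ _),
        integral_add (Continuous.intervalIntegrable (by fun_prop) _ _)
          (Continuous.intervalIntegrable (by fun_prop) _ _),
        integral_const_mul, integral_const_mul]
      ring
    exact hexp ▸ integral_nonneg hab fun t _ => sq_nonneg _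
  have hdisc := discrim_le_zero hquad
  rw [discrim] at hdisc
  rw [← sqrt_mul (integral_nonneg hab fun t _ => sq_nonneg _)]
  exact le_sqrt_of_sq_le (by nlinarith)

theorem abs_integral_le_integral_abs_of_mem_Icc {a b c x : ℝ} (hc : c ∈ Icc a b)
    (hx : x ∈ Icc a b) {f : ℝ → ℝ} (hf : IntervalIntegrable f MeasureTheory.volume a b) :
    |∫ t in c..x, f t| ≤ ∫ t in a..b, |f t| := by
  have hab : a ≤ b := hc.1.trans hc.2
  calc
    |∫ t in c..x, f t| ≤ |(∫ t in c..x, |f t|)| := by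
      simpa only [Real.norm_eq_abs] using
        norm_integral_le_abs_integral_norm (f := f) (a := c) (b := x)
    _ ≤ |(∫ t in a..b, |f t|)| := by
      refine abs_integral_mono_interval (uIoc_subset_uIoc_of_uIcc_subset_uIcc ?_)
        (Filter.Eventually.of_forall fun t => abs_nonneg _) hf.abs
      rw [uIcc_of_le hab]
      exact uIcc_subset_Icc hc hx
    _ = ∫ t in a..b, |f t| := abs_of_nonneg (integral_nonneg hab fun t _ => abs_nonneg _)

section

variable {E : Type*} [NormedAddCommGroup E] [InnerProductSpace ℝ E]

theorem sq_norm_le_integral_sq_norm_add {u u' : ℝ → E} (hu : ∀ t, HasDerivAt u (u' t) t)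
    (hu' : Continuous u') {x : ℝ} (hx : x ∈ Icc (0:ℝ) 1) :
    ‖u x‖ ^ 2 ≤ (∫ t in (0:ℝ)..1, ‖u t‖ ^ 2) + 2 * ∫ t in (0:ℝ)..1, ‖u t‖ * ‖u' t‖ := by
  have huc : Continuous u := continuous_iff_continuousAt.2 fun t => (hu t).continuousAt
  obtain ⟨c, hc, hmin⟩ := isCompact_Icc.exists_isMinOn (nonempty_Icc.2 zero_le_one)
    (huc.norm.pow 2).continuousOn
  have hc_le : ‖u c‖ ^ 2 ≤ ∫ t in (0:ℝ)..1, ‖u t‖ ^ 2 := by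
    simpa using integral_mono_on zero_le_one
      (intervalIntegrable_const (μ := MeasureTheory.volume))
      ((huc.norm.pow 2).intervalIntegrable _ _) fun t ht => hmin ht
  have hftc : ‖u x‖ ^ 2 - ‖u c‖ ^ 2 = ∫ t in c..x, 2 * inner ℝ (u t) (u' t) :=
    (integral_eq_sub_of_hasDerivAt (fun t _ => (hu t).norm_sq)
      (Continuous.intervalIntegrable (by fun_prop) _ _)).symm
  have hvar : ∫ t in c..x, 2 * inner ℝ (u t) (u' t) ≤
      2 * ∫ t in (0:ℝ)..1, ‖u t‖ * ‖u' t‖ :=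
    calc
      _ ≤ |∫ t in c..x, 2 * inner ℝ (u t) (u' t)| := le_abs_self _
      _ ≤ ∫ t in (0:ℝ)..1, |2 * inner ℝ (u t) (u' t)| :=
        abs_integral_le_integral_abs_of_mem_Icc hc hx
          (Continuous.intervalIntegrable (by fun_prop) _ _)
      _ ≤ ∫ t in (0:ℝ)..1, 2 * (‖u t‖ * ‖u' t‖) :=
        integral_mono_on zero_le_one (Continuous.intervalIntegrable (by fun_prop) _ _)
          (Continuous.intervalIntegrable (by fun_prop) _ _) fun t _ => by
            rw [abs_mul, abs_two]
            gcongr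
            exact abs_real_inner_le_norm _ _
      _ = _ := integral_const_mul _ _
  linarith

theorem norm_le_sqrt_integral_sq_norm_deriv [CompleteSpace E] {u u' : ℝ → E}
    (hu : ∀ t, HasDerivAt u (u' t) t) (hu' : Continuous u') (hu0 : u 0 = 0) {x : ℝ}
    (hx : x ∈ Icc (0:ℝ) 1) :
    ‖u x‖ ≤ √(∫ t in (0:ℝ)..1, ‖u' t‖ ^ 2) :=
  calc
    ‖u x‖ = ‖∫ t in (0:ℝ)..x, u' t‖ := by
      rw [integral_eq_sub_of_hasDerivAt (fun t _ => hu t) (hu'.intervalIntegrable _ _), hu0,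
        sub_zero]
    _ ≤ ∫ t in (0:ℝ)..x, ‖u' t‖ := norm_integral_le_integral_norm hx.1
    _ ≤ ∫ t in (0:ℝ)..1, ‖u' t‖ * 1 := by
      simpa using integral_mono_interval le_rfl hx.1 hx.2
        (Filter.Eventually.of_forall fun t => norm_nonneg _) (hu'.norm.intervalIntegrable _ _)
    _ ≤ √(∫ t in (0:ℝ)..1, ‖u' t‖ ^ 2) * √(∫ t in (0:ℝ)..1, (1:ℝ) ^ 2) :=
      integral_mul_le_sqrt_mul_sqrt zero_le_one hu'.norm continuous_const
    _ = _ := by simp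

theorem integral_sq_norm_le_integral_sq_norm_deriv [CompleteSpace E] {u u' : ℝ → E}
    (hu : ∀ t, HasDerivAt u (u' t) t) (hu' : Continuous u') (hu0 : u 0 = 0) :
    ∫ t in (0:ℝ)..1, ‖u t‖ ^ 2 ≤ ∫ t in (0:ℝ)..1, ‖u' t‖ ^ 2 := by
  have huc : Continuous u := continuous_iff_continuousAt.2 fun t => (hu t).continuousAt
  simpa [sq_sqrt (integral_nonneg zero_le_one fun t _ => sq_nonneg ‖u' t‖)] using
    integral_mono_on zero_le_one ((huc.norm.pow 2).intervalIntegrable _ _)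
      (intervalIntegrable_const (μ := MeasureTheory.volume)) fun x hx =>
        pow_le_pow_left₀ (norm_nonneg _) (norm_le_sqrt_integral_sq_norm_deriv hu hu' hu0 hx) 2

theorem integral_inner_deriv_deriv_self {u u' u'' : ℝ → E} {a b : ℝ}
    (hu : ∀ t, HasDerivAt u (u' t) t) (hu' : ∀ t, HasDerivAt u' (u'' t) t)
    (hu'' : Continuous u'') (ha : u a = 0) (hb : u b = 0) :
    ∫ t in a..b, inner ℝ (u'' t) (u t) = -∫ t in a..b, ‖u' t‖ ^ 2 := by
  have huc : Continuous u := continuous_iff_continuousAt.2 fun t => (hu t).continuousAt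
  have hu'c : Continuous u' := continuous_iff_continuousAt.2 fun t => (hu' t).continuousAt
  have hparts := integral_eq_sub_of_hasDerivAt (fun t _ => (hu' t).inner ℝ (hu t))
    (Continuous.intervalIntegrable (by fun_prop) a b)
  rw [ha, hb, inner_zero_right, inner_zero_right, sub_zero,
    integral_add (Continuous.intervalIntegrable (by fun_prop) a b)
      (Continuous.intervalIntegrable (by fun_prop) a b)] at hparts
  simp only [real_inner_self_eq_norm_sq] at hparts
  linarith

theorem energy_estimate [CompleteSpace E] {u u' u'' : ℝ → E}
    (hu : ∀ t, HasDerivAt u (u' t) t) (hu' : ∀ t, HasDerivAt u' (u'' t) t)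
    (hu'' : Continuous u'') (h0 : u 0 = 0) (h1 : u 1 = 0) (k : ℝ) :
    k ^ 2 * (∫ t in (0:ℝ)..1, ‖u t‖ ^ 2) + ∫ t in (0:ℝ)..1, ‖u' t‖ ^ 2 ≤
      √(∫ t in (0:ℝ)..1, ‖u'' t - k ^ 2 • u t‖ ^ 2) * √(∫ t in (0:ℝ)..1, ‖u t‖ ^ 2) := by
  have huc : Continuous u := continuous_iff_continuousAt.2 fun t => (hu t).continuousAt
  have hsplit : ∀ t, inner ℝ (u'' t) (u t) =
      k ^ 2 * ‖u t‖ ^ 2 + inner ℝ (u'' t - k ^ 2 • u t) (u t) := fun t => by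
    rw [inner_sub_left, real_inner_smul_left, real_inner_self_eq_norm_sq]
    ring
  have hid := integral_inner_deriv_deriv_self hu hu' hu'' h0 h1
  simp_rw [hsplit] at hid
  rw [integral_add (Continuous.intervalIntegrable (by fun_prop) _ _)
    (Continuous.intervalIntegrable (by fun_prop) _ _), integral_const_mul] at hid
  have hforce : -∫ t in (0:ℝ)..1, inner ℝ (u'' t - k ^ 2 • u t) (u t) ≤
      ∫ t in (0:ℝ)..1, ‖u'' t - k ^ 2 • u t‖ * ‖u t‖ := by
    rw [← integral_neg]
    exact integral_mono_on zero_le_one (Continuous.intervalIntegrable (by fun_prop) _ _)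
      (Continuous.intervalIntegrable (by fun_prop) _ _) fun t _ =>
        (neg_le_abs _).trans (abs_real_inner_le_norm _ _)
  have hcs := integral_mul_le_sqrt_mul_sqrt zero_le_one
    (f := fun t => ‖u'' t - k ^ 2 • u t‖) (g := fun t => ‖u t‖) (by fun_prop) (by fun_prop)
  linarith

theorem integral_norm_mul_norm_le_sq_mul_add {u v p : ℝ → E} (hu : Continuous u)
    (hv : Continuous v) (hp : Continuous p) (k : ℝ) :
    ∫ t in (0:ℝ)..1, ‖v t‖ * ‖p t‖ ≤
      (k ^ 2 * √(∫ t in (0:ℝ)..1, ‖u t‖ ^ 2) + √(∫ t in (0:ℝ)..1, ‖p t - k ^ 2 • u t‖ ^ 2)) *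
        √(∫ t in (0:ℝ)..1, ‖v t‖ ^ 2) :=
  calc
    _ ≤ ∫ t in (0:ℝ)..1, (k ^ 2 * (‖u t‖ * ‖v t‖) + ‖p t - k ^ 2 • u t‖ * ‖v t‖) :=
      integral_mono_on zero_le_one (Continuous.intervalIntegrable (by fun_prop) _ _)
        (Continuous.intervalIntegrable (by fun_prop) _ _) fun t _ => by
          have := norm_add_le (k ^ 2 • u t) (p t - k ^ 2 • u t)
          rw [add_sub_cancel, norm_smul, norm_of_nonneg (sq_nonneg k)] at this
          nlinarith [norm_nonneg (v t)]
    _ ≤ _ := by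
      rw [integral_add (Continuous.intervalIntegrable (by fun_prop) _ _)
        (Continuous.intervalIntegrable (by fun_prop) _ _), integral_const_mul, add_mul, mul_assoc]
      gcongr
      · exact integral_mul_le_sqrt_mul_sqrt zero_le_one hu.norm hv.norm
      · exact integral_mul_le_sqrt_mul_sqrt zero_le_one (by fun_prop) hv.norm

theorem sq_add_two_mul_le_five_mul_sq_div {k A B F : ℝ} (hk : 0 < k)
    (hB : 0 ≤ B) (hF : 0 ≤ F) (henergy : k ^ 2 * A ^ 2 + B ^ 2 ≤ F * A) (hAB : A ≤ B) :
    B ^ 2 + 2 * (k ^ 2 * A + F) * B ≤ 5 * F ^ 2 / k := by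
  have hkA : k ^ 2 * A ≤ F := by nlinarith
  have hBF : B ≤ F := by nlinarith
  have hkB : k * B ≤ F := by
    refine (pow_le_pow_iff_left₀ (by positivity) hF two_ne_zero).1 ?_
    nlinarith [mul_le_mul_of_nonneg_left henergy (sq_nonneg k),
      mul_le_mul_of_nonneg_left hkA hF, sq_nonneg (k ^ 2 * A)]
  rw [le_div_iff₀ hk]
  nlinarith [mul_le_mul hkB hBF hB hF, mul_le_mul hkA hkB (by positivity) hF]

theorem norm_le_sqrt_div_mul_of_hasDerivAt [CompleteSpace E] {w w' w'' : ℝ → E}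
    (hw : ∀ t, HasDerivAt w (w' t) t) (hw' : ∀ t, HasDerivAt w' (w'' t) t)
    (hw'' : Continuous w'') (h0 : w 0 = 0) (h1 : w 1 = 0) {k : ℝ} (hk : 0 < k) {z : ℝ}
    (hz : z ∈ Icc (0:ℝ) 1) :
    ‖w z‖ ≤ √(5 / k) * z * √(∫ t in (0:ℝ)..1, ‖w'' t - k ^ 2 • w t‖ ^ 2) := by
  have hwc : Continuous w := continuous_iff_continuousAt.2 fun t => (hw t).continuousAt
  have hw'c : Continuous w' := continuous_iff_continuousAt.2 fun t => (hw' t).continuousAt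
  set A := √(∫ t in (0:ℝ)..1, ‖w t‖ ^ 2)
  set B := √(∫ t in (0:ℝ)..1, ‖w' t‖ ^ 2)
  set F := √(∫ t in (0:ℝ)..1, ‖w'' t - k ^ 2 • w t‖ ^ 2)
  have hA2 : A ^ 2 = ∫ t in (0:ℝ)..1, ‖w t‖ ^ 2 :=
    sq_sqrt (integral_nonneg zero_le_one fun t _ => sq_nonneg _)
  have hB2 : B ^ 2 = ∫ t in (0:ℝ)..1, ‖w' t‖ ^ 2 :=
    sq_sqrt (integral_nonneg zero_le_one fun t _ => sq_nonneg _)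
  have hAB : A ≤ B :=
    sqrt_le_sqrt (integral_sq_norm_le_integral_sq_norm_deriv hw hw'c h0)
  have henergy : k ^ 2 * A ^ 2 + B ^ 2 ≤ F * A :=
    hA2 ▸ hB2 ▸ energy_estimate hw hw' hw'' h0 h1 k
  have hcross := integral_norm_mul_norm_le_sq_mul_add hwc hw'c hw'' k
  have hderiv : ∀ x ∈ Ico (0:ℝ) 1, ‖w' x‖ ≤ √(5 / k) * F := fun x hx =>
    calc
      ‖w' x‖ = √(‖w' x‖ ^ 2) := (sqrt_sq (norm_nonneg _)).symm
      _ ≤ √(5 * F ^ 2 / k) := by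
        refine sqrt_le_sqrt ?_
        have hpt := sq_norm_le_integral_sq_norm_add hw' hw'' (Ico_subset_Icc_self hx)
        have := sq_add_two_mul_le_five_mul_sq_div hk (sqrt_nonneg _) (sqrt_nonneg _) henergy hAB
        linarith
      _ = √(5 / k) * F := by
        rw [mul_div_right_comm, sqrt_mul (by positivity), sqrt_sq (sqrt_nonneg _)]
  simpa [h0, mul_right_comm] using
    norm_image_sub_le_of_norm_deriv_le_segment' (fun x _ => (hw x).hasDerivWithinAt) hderiv z hz

theorem norm_le_sqrt_div_mul_of_contDiff [CompleteSpace E] {w : ℝ → E} (hw : ContDiff ℝ 2 w)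
    (h0 : w 0 = 0) (h1 : w 1 = 0) {k : ℝ} (hk : 0 < k) {z : ℝ} (hz : z ∈ Icc (0:ℝ) 1) :
    ‖w z‖ ≤ √(5 / k) * z * √(∫ t in (0:ℝ)..1, ‖iteratedDeriv 2 w t - k ^ 2 • w t‖ ^ 2) := by
  refine norm_le_sqrt_div_mul_of_hasDerivAt
    (fun t => (hw.differentiable two_ne_zero t).hasDerivAt) (fun t => ?_)
    (hw.continuous_iteratedDeriv 2 le_rfl) h0 h1 hk hz
  rw [iteratedDeriv_succ, iteratedDeriv_one]
  exact (hw.differentiable_deriv_two t).hasDerivAt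

end

/-- Pseudo-vorticity pointwise estimate: `|w(z)| ≤ C √k z ‖ζ‖_{L²(0,1)}`. -/
theorem stmt10 :
    ∃ C : ℝ, 0 < C ∧
      ∀ (w ζ : ℝ → ℂ), ContDiff ℝ 2 w → w 0 = 0 → w 1 = 0 →
        ∀ (k : ℝ), 0 < k →
        (∀ z ∈ Set.Ioo (0:ℝ) 1,
          iteratedDeriv 2 w z - (k:ℂ) ^ 2 * w z = (k:ℂ) * ζ z) →
        IntervalIntegrable (fun z => ‖ζ z‖ ^ 2) MeasureTheory.volume 0 1 →
        ∀ z ∈ Set.Icc (0:ℝ) 1,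
          ‖w z‖ ≤ C * Real.sqrt k * z * Real.sqrt (∫ t in (0:ℝ)..1, ‖ζ t‖ ^ 2) := by
  refine ⟨√5, by positivity, fun w ζ hw h0 h1 k hk heq _ z hz => ?_⟩
  have hforcing : ∫ t in (0:ℝ)..1, ‖iteratedDeriv 2 w t - k ^ 2 • w t‖ ^ 2 =
      k ^ 2 * ∫ t in (0:ℝ)..1, ‖ζ t‖ ^ 2 := by
    rw [← integral_const_mul, integral_of_le zero_le_one, integral_of_le zero_le_one,
      MeasureTheory.integral_Ioc_eq_integral_Ioo, MeasureTheory.integral_Ioc_eq_integral_Ioo]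
    refine MeasureTheory.setIntegral_congr_fun measurableSet_Ioo fun t ht => ?_
    rw [Complex.real_smul, Complex.ofReal_pow, heq t ht, norm_mul, Complex.norm_real,
      norm_of_nonneg hk.le, mul_pow]
  calc ‖w z‖ ≤ √(5 / k) * z * √(k ^ 2 * ∫ t in (0:ℝ)..1, ‖ζ t‖ ^ 2) :=
        hforcing ▸ norm_le_sqrt_div_mul_of_contDiff hw h0 h1 hk hz
    _ = √5 * √k * z * √(∫ t in (0:ℝ)..1, ‖ζ t‖ ^ 2) := by
      rw [sqrt_mul (sq_nonneg k), sqrt_sq hk.le, sqrt_div' _ hk.le]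
      field_simp
      rw [sq_sqrt hk.le]
      ring
end

section
/- Lemma (Whitehead–Doering boundary-layer estimate): Let k>0, 0<δ≤1, c₁>0. For all w∈C²([0,1];ℂ) with w(0)=w(1)=0 and all ζ∈C¹([0,1];ℂ) with ζ(0)=ζ(1)=0, one has Re[(1/δ)∫₀^δ w(z)·conj(ζ(z)) dz] ≤ (2/(25k))·δ³·(2c₁‖w''‖²_{L²(0,1)} + (k²/(2c₁))‖w'‖²_{L²(0,1)}) + (1/2)‖ζ'‖²_{L²(0,1)}. -/
/-!
Since `w 0 = w 1`, Rolle's theorem applied to `⟪u, w⟫` gives, for every direction `u`, a zero of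
`⟪u, w'⟫`; with `u` the direction of `w' s`, integrating `(⟪u, w'⟫²)'` from that zero gives
`‖w' s‖² ≤ 2 ∫₀¹ ‖w'‖ ‖w''‖`, which Young's inequality bounds by
`P = (2 c₁ ‖w''‖² + k²/(2 c₁) ‖w'‖²) / k`. Hence `‖w z‖ ≤ z √P`, while Cauchy–Schwarz gives
`‖ζ z‖ ≤ √z ‖ζ'‖`. Integrating `z^{3/2}` over `[0, δ]` bounds the average by
`(2/5) δ^{3/2} √P ‖ζ'‖`, and Young's inequality splits this into `(2/25) δ³ P + ‖ζ'‖² / 2`.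
-/

open intervalIntegral Real Complex Set Filter
open MeasureTheory (volume)
open scoped Interval

theorem two_mul_le_mul_sq_add_inv_mul_sq {x y l : ℝ} (hl : 0 < l) :
    2 * x * y ≤ l * y ^ 2 + l⁻¹ * x ^ 2 := by
  have h : 0 ≤ l⁻¹ * (x - l * y) ^ 2 := by positivity
  have hl' : l⁻¹ * l = 1 := inv_mul_cancel₀ hl.ne'
  nlinarith

theorem two_mul_intervalIntegral_mul_le {f g : ℝ → ℝ} {a b l : ℝ} (hab : a ≤ b) (hl : 0 < l)
    (hf : Continuous f) (hg : Continuous g) :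
    2 * ∫ t in a..b, f t * g t ≤ l * (∫ t in a..b, g t ^ 2) + l⁻¹ * ∫ t in a..b, f t ^ 2 := by
  have hg2 : IntervalIntegrable (fun t ↦ l * g t ^ 2) volume a b :=
    ((hg.pow 2).const_mul l).intervalIntegrable a b
  have hf2 : IntervalIntegrable (fun t ↦ l⁻¹ * f t ^ 2) volume a b :=
    ((hf.pow 2).const_mul l⁻¹).intervalIntegrable a b
  calc 2 * ∫ t in a..b, f t * g t = ∫ t in a..b, 2 * (f t * g t) := (integral_const_mul _ _).symm
    _ ≤ ∫ t in a..b, (l * g t ^ 2 + l⁻¹ * f t ^ 2) :=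
      integral_mono_on hab ((hf.mul hg).const_mul 2 |>.intervalIntegrable _ _) (hg2.add hf2)
        fun t _ ↦ by simpa only [mul_assoc] using two_mul_le_mul_sq_add_inv_mul_sq hl
    _ = _ := by rw [integral_add hg2 hf2, integral_const_mul, integral_const_mul]

theorem sq_intervalIntegral_le_mul_intervalIntegral_sq {g : ℝ → ℝ} {a b : ℝ} (hab : a ≤ b)
    (hg : IntervalIntegrable g volume a b)
    (hg2 : IntervalIntegrable (fun t ↦ g t ^ 2) volume a b) :
    (∫ t in a..b, g t) ^ 2 ≤ (b - a) * ∫ t in a..b, g t ^ 2 := by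
  rcases hab.eq_or_lt with rfl | hab
  · simp
  set I := ∫ t in a..b, g t
  set r := I / (b - a)
  -- integrate `2 r g ≤ r² + g²` at the optimal `r`
  have hmono : ∫ t in a..b, (2 * r * g t - g t ^ 2) ≤ ∫ _ in a..b, r ^ 2 :=
    integral_mono_on hab.le ((hg.const_mul _).sub hg2) intervalIntegrable_const
      fun t _ ↦ by nlinarith [sq_nonneg (g t - r)]
  rw [integral_sub (hg.const_mul _) hg2, integral_const_mul, integral_const, smul_eq_mul] at hmono
  have hba : 0 < b - a := sub_pos.mpr hab
  have hr : r * (b - a) = I := div_mul_cancel₀ _ hba.ne'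
  nlinarith

theorem sq_norm_le_mul_integral_sq_norm_deriv {E : Type*} [NormedAddCommGroup E]
    [NormedSpace ℝ E] [CompleteSpace E] {f : ℝ → E} (hf : ContDiff ℝ 1 f) {a b z : ℝ}
    (hfa : f a = 0) (hz : z ∈ Icc a b) :
    ‖f z‖ ^ 2 ≤ (z - a) * ∫ t in a..b, ‖deriv f t‖ ^ 2 := by
  have hcf' : Continuous (deriv f) := hf.continuous_deriv le_rfl
  have hftc : ∫ t in a..z, deriv f t = f z := by
    rw [integral_deriv_eq_sub (fun t _ ↦ hf.differentiable one_ne_zero t)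
      (hcf'.intervalIntegrable _ _), hfa, sub_zero]
  calc ‖f z‖ ^ 2 ≤ (∫ t in a..z, ‖deriv f t‖) ^ 2 := by
        rw [← hftc]
        exact pow_le_pow_left₀ (norm_nonneg _) (norm_integral_le_integral_norm hz.1) 2
    _ ≤ (z - a) * ∫ t in a..z, ‖deriv f t‖ ^ 2 :=
      sq_intervalIntegral_le_mul_intervalIntegral_sq hz.1 (hcf'.norm.intervalIntegrable _ _)
        ((hcf'.norm.pow 2).intervalIntegrable _ _)
    _ ≤ (z - a) * ∫ t in a..b, ‖deriv f t‖ ^ 2 :=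
      mul_le_mul_of_nonneg_left (integral_mono_interval le_rfl hz.1 hz.2
        (Eventually.of_forall fun _ ↦ sq_nonneg _) ((hcf'.norm.pow 2).intervalIntegrable _ _))
        (sub_nonneg.mpr hz.1)

theorem sq_le_two_mul_integral_abs_mul_abs_deriv {h h' : ℝ → ℝ} {a b t₀ s : ℝ}
    (hh : ∀ t, HasDerivAt h (h' t) t) (hh' : Continuous h') (ht₀ : t₀ ∈ Icc a b)
    (hs : s ∈ Icc a b) (h0 : h t₀ = 0) :
    h s ^ 2 ≤ 2 * ∫ t in a..b, |h t| * |h' t| := by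
  have hcont : Continuous fun t ↦ 2 * h t * h' t :=
    (continuous_const.mul (continuous_iff_continuousAt.mpr fun t ↦ (hh t).continuousAt)).mul hh'
  have hftc : ∫ t in t₀..s, 2 * h t * h' t = h s ^ 2 := by
    have hsq : ∀ t, HasDerivAt (fun t ↦ h t ^ 2) (2 * h t * h' t) t := fun t ↦ by
      simpa [mul_comm, mul_assoc] using (hh t).fun_pow 2
    rw [integral_eq_sub_of_hasDerivAt (fun t _ ↦ hsq t) (hcont.intervalIntegrable _ _), h0]
    ring
  have hab : a ≤ b := ht₀.1.trans ht₀.2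
  have hsub : Ι t₀ s ⊆ Ioc a b := by
    rw [← uIoc_of_le hab]
    refine uIoc_subset_uIoc_of_uIcc_subset_uIcc ?_
    rw [uIcc_of_le hab]
    exact uIcc_subset_Icc ht₀ hs
  calc h s ^ 2 ≤ ‖∫ t in t₀..s, 2 * h t * h' t‖ := by rw [hftc]; exact le_abs_self _
    _ ≤ ∫ t in Ι t₀ s, ‖2 * h t * h' t‖ := norm_integral_le_integral_norm_uIoc
    _ ≤ ∫ t in Ioc a b, ‖2 * h t * h' t‖ :=
      MeasureTheory.setIntegral_mono_set
        (hcont.norm.integrableOn_Icc.mono_set Ioc_subset_Icc_self)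
        (Eventually.of_forall fun _ ↦ norm_nonneg _) hsub.eventuallyLE
    _ = 2 * ∫ t in a..b, |h t| * |h' t| := by
      rw [← integral_of_le hab, ← integral_const_mul]
      simp only [norm_mul, Real.norm_eq_abs, abs_two, mul_assoc]

theorem sq_norm_deriv_le_two_mul_integral_of_eq {E : Type*} [NormedAddCommGroup E]
    [InnerProductSpace ℝ E] {w : ℝ → E} (hw : ContDiff ℝ 2 w) {a b : ℝ} (hab : a < b)
    (hwab : w a = w b) {s : ℝ} (hs : s ∈ Icc a b) :
    ‖deriv w s‖ ^ 2 ≤ 2 * ∫ t in a..b, ‖deriv w t‖ * ‖iteratedDeriv 2 w t‖ := by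
  have hw' : ContDiff ℝ 1 (deriv w) := hw.deriv'
  have hcw' : Continuous (deriv w) := hw.continuous_deriv one_le_two
  have hcw'' : Continuous (iteratedDeriv 2 w) := hw.continuous_iteratedDeriv 2 le_rfl
  have hw'' : ∀ t, HasDerivAt (deriv w) (iteratedDeriv 2 w t) t := fun t ↦ by
    rw [iteratedDeriv_succ, iteratedDeriv_one]
    exact (hw'.differentiable one_ne_zero t).hasDerivAt
  -- `w'` itself need not vanish, but by Rolle its projection onto the direction of `w' s` does
  set v := deriv w s
  set L := innerSL ℝ (‖v‖⁻¹ • v)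
  have hL : ‖L‖ ≤ 1 := by
    rw [innerSL_apply_norm, norm_smul, norm_inv, norm_norm]
    exact inv_mul_le_one_of_le₀ le_rfl (norm_nonneg _)
  have hLv : L v = ‖v‖ := by
    rw [innerSL_apply_apply, real_inner_smul_left, real_inner_self_eq_norm_sq, sq, ← mul_assoc,
      inv_mul_mul_self]
  obtain ⟨t₀, ht₀, hLt₀⟩ := exists_hasDerivAt_eq_zero hab
    (L.continuous.comp hw.continuous).continuousOn (congrArg L hwab)
    fun t _ ↦ L.hasFDerivAt.comp_hasDerivAt t (hw.differentiable two_ne_zero t).hasDerivAt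
  have hproj := sq_le_two_mul_integral_abs_mul_abs_deriv
    (fun t ↦ L.hasFDerivAt.comp_hasDerivAt t (hw'' t)) (L.continuous.comp hcw'')
    (Ioo_subset_Icc_self ht₀) hs hLt₀
  have hLle : ∀ x, |L x| ≤ ‖x‖ := fun x ↦
    (L.le_opNorm x).trans (mul_le_of_le_one_left (norm_nonneg _) hL)
  calc ‖v‖ ^ 2 = L v ^ 2 := by rw [hLv]
    _ ≤ 2 * ∫ t in a..b, |L (deriv w t)| * |L (iteratedDeriv 2 w t)| := hproj
    _ ≤ 2 * ∫ t in a..b, ‖deriv w t‖ * ‖iteratedDeriv 2 w t‖ := by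
      gcongr
      refine integral_mono_on hab.le ?_ ((hcw'.norm.mul hcw''.norm).intervalIntegrable _ _)
        fun t _ ↦ mul_le_mul (hLle _) (hLle _) (abs_nonneg _) (norm_nonneg _)
      exact ((L.continuous.comp hcw').abs.mul (L.continuous.comp hcw'').abs).intervalIntegrable _ _

theorem sq_norm_deriv_le_of_eq {E : Type*} [NormedAddCommGroup E] [InnerProductSpace ℝ E]
    {w : ℝ → E} (hw : ContDiff ℝ 2 w) {a b l : ℝ} (hab : a < b) (hwab : w a = w b) (hl : 0 < l)
    {s : ℝ} (hs : s ∈ Icc a b) :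
    ‖deriv w s‖ ^ 2 ≤
      l * (∫ t in a..b, ‖iteratedDeriv 2 w t‖ ^ 2) + l⁻¹ * ∫ t in a..b, ‖deriv w t‖ ^ 2 :=
  (sq_norm_deriv_le_two_mul_integral_of_eq hw hab hwab hs).trans <|
    two_mul_intervalIntegral_mul_le hab.le hl (hw.continuous_deriv one_le_two).norm
      (hw.continuous_iteratedDeriv 2 le_rfl).norm

theorem integral_mul_sqrt {δ : ℝ} (hδ : 0 ≤ δ) :
    ∫ z in (0 : ℝ)..δ, z * √z = 2 / 5 * δ ^ 2 * √δ := by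
  have hrpow : ∀ z : ℝ, 0 ≤ z → z ^ (2 + 1 / 2 : ℝ) = z ^ 2 * √z := fun z hz ↦ by
    rw [rpow_add' hz (by norm_num), sqrt_eq_rpow, rpow_two]
  have hcongr : EqOn (fun z : ℝ ↦ z * √z) (fun z ↦ z ^ (1 + 1 / 2 : ℝ)) [[0, δ]] := fun z hz ↦ by
    rw [uIcc_of_le hδ] at hz
    simp only [rpow_add' hz.1 (by norm_num : (1 + 1 / 2 : ℝ) ≠ 0), rpow_one, sqrt_eq_rpow]
  rw [integral_congr hcongr, integral_rpow (Or.inl (by norm_num)), zero_rpow (by norm_num),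
    show (1 + 1 / 2 + 1 : ℝ) = 2 + 1 / 2 by norm_num, hrpow δ hδ]
  ring

theorem re_average_mul_conj_le {f g : ℝ → ℂ} {δ A B : ℝ} (hδ : 0 < δ) (hf : Continuous f)
    (hg : Continuous g) (hfA : ∀ z ∈ Icc 0 δ, ‖f z‖ ≤ z * A)
    (hgB : ∀ z ∈ Icc 0 δ, ‖g z‖ ≤ √z * B) :
    ((1 / δ) * ∫ z in (0 : ℝ)..δ, f z * starRingEnd ℂ (g z)).re ≤ 2 / 5 * δ * √δ * (A * B) := by
  have hint : ∫ z in (0 : ℝ)..δ, ‖f z * starRingEnd ℂ (g z)‖ ≤ 2 / 5 * δ ^ 2 * √δ * (A * B) := by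
    rw [← integral_mul_sqrt hδ.le, ← intervalIntegral.integral_mul_const]
    refine integral_mono_on hδ.le ((hf.mul (continuous_conj.comp hg)).norm.intervalIntegrable _ _)
      ((continuous_id.mul continuous_sqrt).mul continuous_const |>.intervalIntegrable _ _)
      fun z hz ↦ ?_
    rw [norm_mul, RCLike.norm_conj]
    calc ‖f z‖ * ‖g z‖ ≤ z * A * (√z * B) :=
          mul_le_mul (hfA z hz) (hgB z hz) (norm_nonneg _) ((norm_nonneg _).trans (hfA z hz))
      _ = z * √z * (A * B) := by ring
  rw [← ofReal_one, ← ofReal_div, re_ofReal_mul]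
  calc 1 / δ * (∫ z in (0 : ℝ)..δ, f z * starRingEnd ℂ (g z)).re
      ≤ 1 / δ * (2 / 5 * δ ^ 2 * √δ * (A * B)) := by
        gcongr
        exact (re_le_norm _).trans ((norm_integral_le_integral_norm hδ.le).trans hint)
    _ = 2 / 5 * δ * √δ * (A * B) := by field_simp

theorem stmt11_general (k δ c₁ : ℝ) (hk : 0 < k) (hδ : 0 < δ) (hδ1 : δ ≤ 1) (hc₁ : 0 < c₁)
    (w ζ : ℝ → ℂ) (hw : ContDiff ℝ 2 w) (hζ : ContDiff ℝ 1 ζ)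
    (hw0 : w 0 = 0) (hw1 : w 1 = 0) (hζ0 : ζ 0 = 0) :
    ((1 / δ) * ∫ z in (0:ℝ)..δ, w z * (starRingEnd ℂ) (ζ z)).re ≤
      (2 / (25 * k)) * δ ^ 3 *
        (2 * c₁ * (∫ z in (0:ℝ)..1, ‖iteratedDeriv 2 w z‖ ^ 2)
          + (k ^ 2 / (2 * c₁)) * (∫ z in (0:ℝ)..1, ‖deriv w z‖ ^ 2))
      + (1/2) * ∫ z in (0:ℝ)..1, ‖deriv ζ z‖ ^ 2 := by
  set B := ∫ z in (0:ℝ)..1, ‖iteratedDeriv 2 w z‖ ^ 2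
  set C := ∫ z in (0:ℝ)..1, ‖deriv w z‖ ^ 2
  set D := ∫ z in (0:ℝ)..1, ‖deriv ζ z‖ ^ 2
  set P := (2 * c₁ * B + k ^ 2 / (2 * c₁) * C) / k with hP
  have hdw : ∀ s ∈ Icc (0 : ℝ) 1, ‖deriv w s‖ ≤ √P := fun s hs ↦ le_sqrt_of_sq_le <|
    (sq_norm_deriv_le_of_eq hw one_pos (hw0.trans hw1.symm) (by positivity : 0 < 2 * c₁ / k)
      hs).trans_eq (by rw [hP]; field_simp; rfl)
  have hwz : ∀ z ∈ Icc 0 δ, ‖w z‖ ≤ z * √P := fun z hz ↦ by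
    simpa [hw0, mul_comm] using norm_image_sub_le_of_norm_deriv_le_segment'
      (fun x _ ↦ (hw.differentiable two_ne_zero x).hasDerivAt.hasDerivWithinAt)
      (fun x hx ↦ hdw x ⟨hx.1, hx.2.le.trans hδ1⟩) z hz
  have hζz : ∀ z ∈ Icc 0 δ, ‖ζ z‖ ≤ √z * √D := fun z hz ↦ by
    rw [← sqrt_mul hz.1]
    simpa using le_sqrt_of_sq_le
      (sq_norm_le_mul_integral_sq_norm_deriv hζ hζ0 ⟨hz.1, hz.2.trans hδ1⟩)
  have hB : 0 ≤ B := integral_nonneg zero_le_one fun _ _ ↦ sq_nonneg _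
  have hC : 0 ≤ C := integral_nonneg zero_le_one fun _ _ ↦ sq_nonneg _
  have hD : 0 ≤ D := integral_nonneg zero_le_one fun _ _ ↦ sq_nonneg _
  calc _ ≤ 2 / 5 * δ * √δ * (√P * √D) :=
        re_average_mul_conj_le hδ hw.continuous hζ.continuous hwz hζz
    _ = 2 * (δ * √δ * √P / 5) * √D := by ring
    _ ≤ 1 / 2 * √D ^ 2 + (1 / 2)⁻¹ * (δ * √δ * √P / 5) ^ 2 :=
      two_mul_le_mul_sq_add_inv_mul_sq one_half_pos
    _ = _ := by
      rw [div_pow, mul_pow, mul_pow, sq_sqrt hδ.le, sq_sqrt hD, sq_sqrt (by positivity), hP]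
      field_simp
      ring

/-- Whitehead–Doering boundary-layer estimate. -/
theorem stmt11 (k δ c₁ : ℝ) (hk : 0 < k) (hδ : 0 < δ) (hδ1 : δ ≤ 1) (hc₁ : 0 < c₁)
    (w ζ : ℝ → ℂ) (hw : ContDiff ℝ 2 w) (hζ : ContDiff ℝ 1 ζ)
    (hw0 : w 0 = 0) (hw1 : w 1 = 0) (hζ0 : ζ 0 = 0) (hζ1 : ζ 1 = 0) :
    ((1 / δ) * ∫ z in (0:ℝ)..δ, w z * (starRingEnd ℂ) (ζ z)).re ≤
      (2 / (25 * k)) * δ ^ 3 *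
        (2 * c₁ * (∫ z in (0:ℝ)..1, ‖iteratedDeriv 2 w z‖ ^ 2)
          + (k ^ 2 / (2 * c₁)) * (∫ z in (0:ℝ)..1, ‖deriv w z‖ ^ 2))
      + (1/2) * ∫ z in (0:ℝ)..1, ‖deriv ζ z‖ ^ 2 :=
  stmt11_general k δ c₁ hk hδ hδ1 hc₁ w ζ hw hζ hw0 hw1 hζ0
end
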